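/- Let n be even and let W^(n)_n be the FTD-DTQW with periodic position measurements with span d(n) = 2 (so M(n) = n/2), with each reprepared coin state equal to e_L with probability 1/2 and e_R with probability 1/2. Let X^(La)_m be the lazy random walk on ℤ with final time n and parameter r(n). Then for every even integer x, P(W^(n)_n = x) = P(X^(La)_{n/2} = x/2). -/
import Mathlib


open MeasureTheory Filter Real Topology

noncomputable section

/-- Coin-state amplitude of the discrete-time quantum walk on ℤ with quantum coin `H`
and initial coin state `φ` (localized at the origin). -/
def dtqwAmp (H : Matrix (Fin 2) (Fin 2) ℂ) (φ : Fin 2 → ℂ) : ℕ → ℤ → Fin 2 → ℂ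
  | 0 => fun x => if x = 0 then φ else 0
  | n + 1 => fun x i =>
      if i = 0 then
        H 0 0 * dtqwAmp H φ n (x + 1) 0 + H 0 1 * dtqwAmp H φ n (x + 1) 1
      else
        H 1 0 * dtqwAmp H φ n (x - 1) 0 + H 1 1 * dtqwAmp H φ n (x - 1) 1

/-- Position distribution `P(X_n = x) = ‖Ψ_n(x)‖²` of the DTQW. -/
def dtqwDist (H : Matrix (Fin 2) (Fin 2) ℂ) (φ : Fin 2 → ℂ) (n : ℕ) (x : ℤ) : ℝ :=
  ‖dtqwAmp H φ n x 0‖ ^ 2 + ‖dtqwAmp H φ n x 1‖ ^ 2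

/-- The final-time-dependent quantum coin. -/
def ftdCoin (ρ : ℝ) : Matrix (Fin 2) (Fin 2) ℂ :=
  !![(Real.sqrt ρ : ℂ), (Real.sqrt (1 - ρ) : ℂ);
     (Real.sqrt (1 - ρ) : ℂ), -(Real.sqrt ρ : ℂ)]

/-- Distribution of an `m`-step block of the FTD-DTQW whose initial coin state is
`e_L` with probability 1/2 and `e_R` with probability 1/2. -/
def mixDist (ρ : ℝ) (m : ℕ) (x : ℤ) : ℝ :=
  (dtqwDist (ftdCoin ρ) ![1, 0] m x + dtqwDist (ftdCoin ρ) ![0, 1] m x) / 2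

/-- Convolution of two distributions on ℤ. -/
def zconv (μ ν : ℤ → ℝ) (x : ℤ) : ℝ := ∑' y : ℤ, μ y * ν (x - y)

/-- Distribution of the sum of `m` independent copies. -/
def zconvFin (μ : ℕ → ℤ → ℝ) : ℕ → ℤ → ℝ
  | 0 => fun x => if x = 0 then 1 else 0
  | m + 1 => zconv (μ (m + 1)) (zconvFin μ m)

/-- Distribution `p_m(x)` of the lazy random walk on ℤ with movement probability `ρ`. -/
def lazyDist (ρ : ℝ) : ℕ → ℤ → ℝ
  | 0 => fun x => if x = 0 then 1 else 0
  | m + 1 => fun x =>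
      (1 - ρ) * lazyDist ρ m x + (ρ / 2) * (lazyDist ρ m (x - 1) + lazyDist ρ m (x + 1))


lemma ampS (H : Matrix (Fin 2) (Fin 2) ℂ) (φ : Fin 2 → ℂ) (n : ℕ) (x : ℤ) (i : Fin 2) :
    dtqwAmp H φ (n+1) x i =
      if i = 0 then
        H 0 0 * dtqwAmp H φ n (x + 1) 0 + H 0 1 * dtqwAmp H φ n (x + 1) 1
      else
        H 1 0 * dtqwAmp H φ n (x - 1) 0 + H 1 1 * dtqwAmp H φ n (x - 1) 1 := rfl

lemma amp0 (H : Matrix (Fin 2) (Fin 2) ℂ) (φ : Fin 2 → ℂ) (x : ℤ) (i : Fin 2) :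
    dtqwAmp H φ 0 x i = if x = 0 then φ i else 0 := by
  show (if x = 0 then φ else 0) i = _
  split <;> rfl

lemma amp1L (H : Matrix (Fin 2) (Fin 2) ℂ) (φ : Fin 2 → ℂ) (x : ℤ) :
    dtqwAmp H φ 1 x 0 = if x = -1 then H 0 0 * φ 0 + H 0 1 * φ 1 else 0 := by
  rw [show dtqwAmp H φ 1 = dtqwAmp H φ (0+1) from rfl, ampS]
  simp only [if_pos rfl, amp0]
  split_ifs with h1 h2 h2 <;> (try omega) <;> simp

lemma amp1R (H : Matrix (Fin 2) (Fin 2) ℂ) (φ : Fin 2 → ℂ) (x : ℤ) :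
    dtqwAmp H φ 1 x 1 = if x = 1 then H 1 0 * φ 0 + H 1 1 * φ 1 else 0 := by
  rw [show dtqwAmp H φ 1 = dtqwAmp H φ (0+1) from rfl, ampS]
  rw [if_neg (by decide : ¬(1:Fin 2) = 0)]
  simp only [amp0]
  split_ifs with h1 h2 h2 <;> (try omega) <;> simp

lemma amp2L (H : Matrix (Fin 2) (Fin 2) ℂ) (φ : Fin 2 → ℂ) (x : ℤ) :
    dtqwAmp H φ 2 x 0 =
      if x = -2 then H 0 0 * (H 0 0 * φ 0 + H 0 1 * φ 1)
      else if x = 0 then H 0 1 * (H 1 0 * φ 0 + H 1 1 * φ 1) else 0 := by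
  rw [show dtqwAmp H φ 2 = dtqwAmp H φ (1+1) from rfl, ampS]
  simp only [if_pos rfl, amp1L, amp1R]
  split_ifs with h1 h2 h3 h3 h2 h3 h3 <;> (try omega) <;> ring

lemma amp2R (H : Matrix (Fin 2) (Fin 2) ℂ) (φ : Fin 2 → ℂ) (x : ℤ) :
    dtqwAmp H φ 2 x 1 =
      if x = 0 then H 1 0 * (H 0 0 * φ 0 + H 0 1 * φ 1)
      else if x = 2 then H 1 1 * (H 1 0 * φ 0 + H 1 1 * φ 1) else 0 := by
  rw [show dtqwAmp H φ 2 = dtqwAmp H φ (1+1) from rfl, ampS]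
  rw [if_neg (by decide : ¬(1:Fin 2) = 0)]
  simp only [amp1L, amp1R]
  split_ifs with h1 h2 h3 h3 h2 h3 h3 <;> (try omega) <;> ring


lemma mix2 (r : ℝ) (hr : r ∈ Set.Ioo (0:ℝ) 1) (y : ℤ) :
    mixDist r 2 y = if y = -2 ∨ y = 2 then r/2 else if y = 0 then 1 - r else 0 := by
  obtain ⟨hr0, hr1⟩ := hr
  have h1 : Real.sqrt r * Real.sqrt r = r := Real.mul_self_sqrt hr0.le
  have h2 : Real.sqrt (1-r) * Real.sqrt (1-r) = 1 - r := Real.mul_self_sqrt (by linarith)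
  have hs0 : (0:ℝ) ≤ Real.sqrt r := Real.sqrt_nonneg _
  have hs1 : (0:ℝ) ≤ Real.sqrt (1-r) := Real.sqrt_nonneg _
  simp only [mixDist, dtqwDist, amp2L, amp2R, ftdCoin, Matrix.cons_val', Matrix.cons_val_zero,
    Matrix.cons_val_one, Matrix.head_cons, Matrix.empty_val', Matrix.cons_val_fin_one,
    Matrix.head_fin_const, Matrix.of_apply, mul_one, mul_zero, add_zero, zero_add]
  by_cases hy1 : y = -2
  · subst hy1
    norm_num
    simp only [← Complex.ofReal_mul, Complex.norm_real, Real.norm_eq_abs, abs_mul,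
      abs_of_nonneg hs0, abs_of_nonneg hs1]
    nlinarith
  by_cases hy2 : y = 2
  · subst hy2
    norm_num
    simp only [← Complex.ofReal_mul, ← Complex.ofReal_neg, Complex.norm_real,
      Real.norm_eq_abs, abs_mul, abs_neg, abs_of_nonneg hs0, abs_of_nonneg hs1]
    nlinarith
  by_cases hy3 : y = 0
  · subst hy3
    norm_num
    simp only [← Complex.ofReal_mul, ← Complex.ofReal_neg, Complex.norm_real,
      Real.norm_eq_abs, abs_mul, abs_neg, abs_of_nonneg hs0, abs_of_nonneg hs1]
    nlinarith
  · simp [hy1, hy2, hy3]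

lemma main_ind (r : ℝ) (hr : r ∈ Set.Ioo (0:ℝ) 1) :
    ∀ m : ℕ, ∀ x : ℤ, Even x →
      zconvFin (fun _ => mixDist r 2) m x = lazyDist r m (x / 2) := by
  intro m
  induction m with
  | zero =>
    intro x hx
    obtain ⟨k, rfl⟩ := hx
    simp only [zconvFin, lazyDist]
    rw [show ((k + k) / 2 : ℤ) = k by omega]
    split_ifs <;> first | rfl | omega
  | succ m ih =>
    intro x hx
    obtain ⟨k, hk⟩ := hx
    show zconv (mixDist r 2) (zconvFin (fun _ => mixDist r 2) m) x = _
    unfold zconv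
    rw [tsum_eq_sum (s := ({-2, 0, 2} : Finset ℤ)) (by
      intro b hb
      have h := mix2 r hr b
      simp only [Finset.mem_insert, Finset.mem_singleton, not_or] at hb
      rw [h, if_neg (by tauto), if_neg (by tauto), zero_mul])]
    rw [Finset.sum_insert (by decide), Finset.sum_insert (by decide), Finset.sum_singleton]
    rw [mix2 r hr (-2), mix2 r hr 0, mix2 r hr 2]
    norm_num
    rw [ih (x + 2) ⟨k + 1, by omega⟩, ih x ⟨k, hk⟩, ih (x - 2) ⟨k - 1, by omega⟩]
    rw [show ((x + 2) / 2 : ℤ) = x / 2 + 1 by omega, show ((x - 2) / 2 : ℤ) = x / 2 - 1 by omega]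
    show _ = (1 - r) * lazyDist r m (x / 2) +
      (r / 2) * (lazyDist r m (x / 2 - 1) + lazyDist r m (x / 2 + 1))
    ring

/-- **Remark 1 (1).** For even final time `n`, the FTD-DTQW with position measurements
every `d(n) = 2` steps (`M(n) = n/2`, coin refreshed to `e_L`/`e_R` with probability 1/2
each) coincides on even sites with the lazy random walk:
`P(W^(n)_n = x) = P(X^(La)_{n/2} = x/2)` for every even `x`. -/
theorem ftd_dtqw_two_step_measurement_is_lazy_rw
    (r : ℝ) (hr : r ∈ Set.Ioo (0 : ℝ) 1)
    (n : ℕ) (hn : Even n)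
    (x : ℤ) (hx : Even x) :
    zconvFin (fun _ => mixDist r 2) (n / 2) x = lazyDist r (n / 2) (x / 2) :=
  main_ind r hr (n / 2) x hx
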